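/- Under the same assumptions (‖∇z_{i,c}(θ)‖_∞ ≤ G and second-order partials of each z_{i,c} bounded by M), every second-order partial derivative of L_BE(θ) = -log softmax((1/|B|)∑_{i∈B} z_i(θ))_ŷ is bounded in absolute value by 2(M + G²). -/

import Mathlib

noncomputable def softmax {C : ℕ} (z : Fin C → ℝ) (c : Fin C) : ℝ :=
  Real.exp (z c) / ∑ j, Real.exp (z j)

/-- The bundle cross-entropy loss as a function of the model parameter θ. -/
noncomputable def LBE {ι : Type*} {C nd : ℕ} (B : Finset ι)
    (z : ι → Fin C → (Fin nd → ℝ) → ℝ) (yh : Fin C) (θ : Fin nd → ℝ) : ℝ :=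
  -Real.log (softmax (fun c => (B.card : ℝ)⁻¹ * ∑ i ∈ B, z i c θ) yh)

/-!
With `u` the averaged logits and `p = softmax u`, the loss is `log ∑ⱼ exp uⱼ - u_ŷ`, whose mixed
second derivative is `∑ⱼ pⱼ (∂ₖuⱼ - ∑ᵢ pᵢ ∂ₖuᵢ) ∂ₗuⱼ + ∑ⱼ pⱼ ∂ₖ∂ₗuⱼ - ∂ₖ∂ₗu_ŷ`. Averaging preserves
the bounds `G` and `M`, the centred derivative `∂ₖuⱼ - ∑ᵢ pᵢ ∂ₖuᵢ` is bounded by `2G`, and `p` is a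
probability vector, so the whole expression is at most `2G² + M + M`.
-/

open Finset Real

lemma deriv_coord_eq_lineDeriv {ι : Type*} [DecidableEq ι] (f : (ι → ℝ) → ℝ) (θ : ι → ℝ)
    (k : ι) :
    deriv (fun t : ℝ => f (fun j => θ j + if j = k then t else 0)) 0 =
      lineDeriv ℝ f θ (Pi.single k 1) := by
  unfold lineDeriv
  congr 1; funext t; congr 1; funext j
  simp [Pi.single_apply]

lemma deriv_deriv_coord_eq_lineDeriv_lineDeriv {ι : Type*} [DecidableEq ι]
    (f : (ι → ℝ) → ℝ) (θ : ι → ℝ) (k l : ι) :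
    deriv (fun s : ℝ => deriv (fun t : ℝ =>
        f (fun j => θ j + (if j = k then s else 0) + (if j = l then t else 0))) 0) 0 =
      lineDeriv ℝ (fun x => lineDeriv ℝ f x (Pi.single l 1)) θ (Pi.single k 1) := by
  simp_rw [← deriv_coord_eq_lineDeriv f]
  unfold lineDeriv
  congr 1; funext s; congr 1; funext t; congr 1; funext j
  simp [Pi.single_apply]

section Softmax

variable {C : ℕ}

lemma softmax_nonneg (z : Fin C → ℝ) (c : Fin C) : 0 ≤ softmax z c := by
  unfold softmax; positivity

lemma sum_exp_pos (z : Fin C → ℝ) (c : Fin C) : 0 < ∑ j, exp (z j) :=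
  sum_pos (fun _ _ => exp_pos _) ⟨c, mem_univ _⟩

lemma sum_softmax (z : Fin C → ℝ) (c : Fin C) : ∑ j, softmax z j = 1 := by
  simp only [softmax, ← sum_div]
  exact div_self (sum_exp_pos z c).ne'

lemma softmax_eq_exp_sub_log (z : Fin C → ℝ) (c : Fin C) :
    softmax z c = exp (z c - log (∑ j, exp (z j))) := by
  rw [exp_sub, exp_log (sum_exp_pos z c), softmax]

lemma neg_log_softmax (z : Fin C → ℝ) (c : Fin C) :
    -log (softmax z c) = log (∑ j, exp (z j)) - z c := by
  rw [softmax_eq_exp_sub_log, log_exp, neg_sub]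

variable {w : ℝ → Fin C → ℝ} {w' : Fin C → ℝ} {t : ℝ}

lemma hasDerivAt_log_sum_exp (hw : ∀ j, HasDerivAt (fun t => w t j) (w' j) t) (c : Fin C) :
    HasDerivAt (fun t => log (∑ j, exp (w t j))) (∑ j, softmax (w t) j * w' j) t := by
  have hS := HasDerivAt.fun_sum fun j (_ : j ∈ univ) => (hw j).exp
  convert hS.log (sum_exp_pos (w t) c).ne' using 1
  simp only [softmax, sum_div]
  exact sum_congr rfl fun j _ => by ring

end Softmax

section LineDeriv

variable {E : Type*} [NormedAddCommGroup E] [NormedSpace ℝ E]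

lemma ContDiff.differentiable_lineDeriv {f : E → ℝ} (hf : ContDiff ℝ 2 f) (v : E) :
    Differentiable ℝ (fun x => lineDeriv ℝ f x v) := by
  have hfv : ContDiff ℝ 1 (fun x => fderiv ℝ f x v) :=
    (ContinuousLinearMap.apply ℝ ℝ v).contDiff.comp (hf.fderiv_right le_rfl)
  simp_rw [fun x => (hf.differentiable two_ne_zero x).lineDeriv_eq_fderiv (v := v)]
  exact hfv.differentiable one_ne_zero

lemma lineDeriv_const_mul_sum {ι : Type*} (s : Finset ι) (a : ℝ) {f : ι → E → ℝ} {x : E}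
    (hf : ∀ i ∈ s, DifferentiableAt ℝ (f i) x) (v : E) :
    lineDeriv ℝ (fun y => a * ∑ i ∈ s, f i y) x v = a * ∑ i ∈ s, lineDeriv ℝ (f i) x v := by
  refine HasLineDerivAt.lineDeriv ?_
  exact (HasDerivAt.fun_sum fun i hi => (hf i hi).lineDifferentiableAt.hasLineDerivAt).const_mul a

variable {C : ℕ} {u : Fin C → E → ℝ} {u' : Fin C → ℝ} {x v : E}

lemma hasLineDerivAt_softmax (hu : ∀ j, HasLineDerivAt ℝ (u j) (u' j) x v) (c : Fin C) :
    HasLineDerivAt ℝ (fun x => softmax (fun j => u j x) c)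
      (softmax (fun j => u j x) c * (u' c - ∑ j, softmax (fun j => u j x) j * u' j)) x v := by
  have hw := hasDerivAt_log_sum_exp (w := fun t j => u j (x + t • v)) hu c
  simp only [zero_smul, add_zero] at hw
  unfold HasLineDerivAt
  simp_rw [softmax_eq_exp_sub_log _ c]
  simpa using ((hu c).fun_sub hw).exp

lemma hasLineDerivAt_neg_log_softmax (hu : ∀ j, HasLineDerivAt ℝ (u j) (u' j) x v)
    (c : Fin C) :
    HasLineDerivAt ℝ (fun x => -log (softmax (fun j => u j x) c))
      (∑ j, softmax (fun j => u j x) j * u' j - u' c) x v := by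
  have hw := hasDerivAt_log_sum_exp (w := fun t j => u j (x + t • v)) hu c
  simp only [zero_smul, add_zero] at hw
  unfold HasLineDerivAt
  simp_rw [neg_log_softmax]
  exact hw.fun_sub (hu c)

lemma lineDeriv_neg_log_softmax (hu : ∀ j, DifferentiableAt ℝ (u j) x) (c : Fin C) :
    lineDeriv ℝ (fun x => -log (softmax (fun j => u j x) c)) x v =
      ∑ j, softmax (fun j => u j x) j * lineDeriv ℝ (u j) x v - lineDeriv ℝ (u c) x v :=
  (hasLineDerivAt_neg_log_softmax (fun j => (hu j).lineDifferentiableAt.hasLineDerivAt) c).lineDeriv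

lemma lineDeriv_lineDeriv_neg_log_softmax (hu : ∀ j, ContDiff ℝ 2 (u j)) (c : Fin C)
    (x v w : E) :
    lineDeriv ℝ (fun x => lineDeriv ℝ (fun x => -log (softmax (fun j => u j x) c)) x w) x v =
      ∑ j, (softmax (fun j => u j x) j *
            (lineDeriv ℝ (u j) x v - ∑ i, softmax (fun j => u j x) i * lineDeriv ℝ (u i) x v) *
            lineDeriv ℝ (u j) x w +
          softmax (fun j => u j x) j * lineDeriv ℝ (fun x => lineDeriv ℝ (u j) x w) x v) -
        lineDeriv ℝ (fun x => lineDeriv ℝ (u c) x w) x v := by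
  have hdiff j : Differentiable ℝ (u j) := (hu j).differentiable two_ne_zero
  have hu' j : HasLineDerivAt ℝ (u j) (lineDeriv ℝ (u j) x v) x v :=
    (hdiff j x).lineDifferentiableAt.hasLineDerivAt
  have hu'' j : HasLineDerivAt ℝ (fun x => lineDeriv ℝ (u j) x w)
      (lineDeriv ℝ (fun x => lineDeriv ℝ (u j) x w) x v) x v :=
    ((hu j).differentiable_lineDeriv w x).lineDifferentiableAt.hasLineDerivAt
  simp_rw [lineDeriv_neg_log_softmax (v := w) (fun j => hdiff j _) c]
  refine HasLineDerivAt.lineDeriv ?_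
  unfold HasLineDerivAt
  simpa using (HasDerivAt.fun_sum fun j (_ : j ∈ univ) =>
    (hasLineDerivAt_softmax hu' j).fun_mul (hu'' j)).fun_sub (hu'' c)

end LineDeriv

section Bounds

lemma abs_inv_card_mul_sum_le {ι : Type*} {s : Finset ι} (hs : s.Nonempty) {f : ι → ℝ}
    {K : ℝ} (hf : ∀ i ∈ s, |f i| ≤ K) : |(s.card : ℝ)⁻¹ * ∑ i ∈ s, f i| ≤ K := by
  have hcard : (0 : ℝ) < s.card := by exact_mod_cast hs.card_pos
  rw [abs_mul, abs_inv, Nat.abs_cast, inv_mul_le_iff₀ hcard]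
  calc |∑ i ∈ s, f i| ≤ ∑ i ∈ s, |f i| := abs_sum_le_sum_abs _ _
    _ ≤ ∑ _i ∈ s, K := sum_le_sum hf
    _ = s.card * K := by rw [sum_const, nsmul_eq_mul]

variable {ι : Type*} [Fintype ι] {p : ι → ℝ}

lemma abs_sum_mul_le_of_sum_eq_one (hp : ∀ i, 0 ≤ p i) (hsum : ∑ i, p i = 1) {f : ι → ℝ}
    {K : ℝ} (hf : ∀ i, |f i| ≤ K) : |∑ i, p i * f i| ≤ K :=
  calc |∑ i, p i * f i| ≤ ∑ i, p i * |f i| := by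
        simpa only [abs_mul, abs_of_nonneg (hp _)] using
          abs_sum_le_sum_abs (fun i => p i * f i) univ
    _ ≤ ∑ i, p i * K := sum_le_sum fun i _ => mul_le_mul_of_nonneg_left (hf i) (hp i)
    _ = K := by rw [← sum_mul, hsum, one_mul]

/-- `a` and `b` play the derivatives of the logits in the two directions, `h` their mixed second
derivatives. -/
lemma abs_softmax_hessian_le (hp : ∀ i, 0 ≤ p i) (hsum : ∑ i, p i = 1) {a b h : ι → ℝ}
    {G M : ℝ} (ha : ∀ i, |a i| ≤ G) (hb : ∀ i, |b i| ≤ G) (hh : ∀ i, |h i| ≤ M) (y : ι) :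
    |∑ j, (p j * (a j - ∑ i, p i * a i) * b j + p j * h j) - h y| ≤ 2 * (M + G ^ 2) := by
  have hG : 0 ≤ G := (abs_nonneg _).trans (ha y)
  have hmean : |∑ i, p i * a i| ≤ G := abs_sum_mul_le_of_sum_eq_one hp hsum ha
  have hterm j : |(a j - ∑ i, p i * a i) * b j + h j| ≤ 2 * G ^ 2 + M := by
    have hcentered : |a j - ∑ i, p i * a i| ≤ 2 * G := (abs_sub (a j) _).trans (by linarith [ha j])
    calc |(a j - ∑ i, p i * a i) * b j + h j|
        ≤ |a j - ∑ i, p i * a i| * |b j| + |h j| := by rw [← abs_mul]; exact abs_add_le _ _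
      _ ≤ 2 * G * G + M := by gcongr; exacts [hb j, hh j]
      _ = 2 * G ^ 2 + M := by ring
  have hsum_bound := abs_sum_mul_le_of_sum_eq_one hp hsum hterm
  calc |∑ j, (p j * (a j - ∑ i, p i * a i) * b j + p j * h j) - h y|
      ≤ |∑ j, p j * ((a j - ∑ i, p i * a i) * b j + h j)| + |h y| := by
        simp only [mul_add, mul_assoc]; exact abs_sub _ _
    _ ≤ 2 * (M + G ^ 2) := by linarith [hh y]

end Bounds

/-- If all partial derivatives of the logits are bounded by `G` and all second-order
partials by `M`, then every second-order partial derivative of `L_BE` is bounded in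
absolute value by `2(M + G²)`. -/
theorem stmt6 {ι : Type*} {C nd : ℕ} [DecidableEq (Fin nd)] (B : Finset ι) (hB : B.Nonempty)
    (z : ι → Fin C → (Fin nd → ℝ) → ℝ) (yh : Fin C) (G M : ℝ)
    (hsmooth : ∀ i ∈ B, ∀ c, ContDiff ℝ 2 (z i c))
    (hgrad : ∀ i ∈ B, ∀ c (θ : Fin nd → ℝ) (k : Fin nd),
      |deriv (fun t : ℝ => z i c (fun j => θ j + if j = k then t else 0)) 0| ≤ G)
    (hhess : ∀ i ∈ B, ∀ c (θ : Fin nd → ℝ) (k l : Fin nd),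
      |deriv (fun s : ℝ => deriv (fun t : ℝ =>
        z i c (fun j => θ j + (if j = k then s else 0) + (if j = l then t else 0))) 0) 0| ≤ M) :
    ∀ (θ : Fin nd → ℝ) (k l : Fin nd),
      |deriv (fun s : ℝ => deriv (fun t : ℝ =>
        LBE B z yh (fun j => θ j + (if j = k then s else 0) + (if j = l then t else 0))) 0) 0|
        ≤ 2 * (M + G ^ 2) := by
  intro θ k l
  set u : Fin C → (Fin nd → ℝ) → ℝ := fun c x => (B.card : ℝ)⁻¹ * ∑ i ∈ B, z i c x
  have hLBE : LBE B z yh = fun x => -log (softmax (fun c => u c x) yh) := rfl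
  have hu c : ContDiff ℝ 2 (u c) := contDiff_const.mul (ContDiff.sum fun i hi => hsmooth i hi c)
  have hDu c x v : lineDeriv ℝ (u c) x v = (B.card : ℝ)⁻¹ * ∑ i ∈ B, lineDeriv ℝ (z i c) x v :=
    lineDeriv_const_mul_sum B _ (fun i hi => (hsmooth i hi c).differentiable two_ne_zero x) v
  have hD2u c v w : lineDeriv ℝ (fun x => lineDeriv ℝ (u c) x w) θ v =
      (B.card : ℝ)⁻¹ * ∑ i ∈ B, lineDeriv ℝ (fun x => lineDeriv ℝ (z i c) x w) θ v := by
    simp_rw [hDu c _ w]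
    exact lineDeriv_const_mul_sum B _ (fun i hi => (hsmooth i hi c).differentiable_lineDeriv w θ) v
  rw [deriv_deriv_coord_eq_lineDeriv_lineDeriv, hLBE, lineDeriv_lineDeriv_neg_log_softmax hu]
  refine abs_softmax_hessian_le (softmax_nonneg _) (sum_softmax _ yh) (fun j => ?_) (fun j => ?_)
    (fun j => ?_) yh
  · rw [hDu]
    exact abs_inv_card_mul_sum_le hB fun i hi => by
      simpa only [deriv_coord_eq_lineDeriv] using hgrad i hi j θ k
  · rw [hDu]
    exact abs_inv_card_mul_sum_le hB fun i hi => by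
      simpa only [deriv_coord_eq_lineDeriv] using hgrad i hi j θ l
  · rw [hD2u]
    exact abs_inv_card_mul_sum_le hB fun i hi => by
      simpa only [deriv_deriv_coord_eq_lineDeriv_lineDeriv] using hhess i hi j θ k l
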